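/- arXiv:1609.01245 — 2 statements merged into one kernel-verified Lean document; each statement's English description precedes it below -/
import Mathlib

section
/- For every real number a ≥ 1, if x₀ = x₀(a) denotes the unique positive solution of (1+x)^a · x = 1, then a · x₀(a) ≥ (√5 − 1)/2. In particular, 1/x₀(a) ≤ ((√5 + 1)/2) · a. -/
/-!
Put `g = φ⁻¹ = (√5 - 1)/2`, so that `g (1 + g) = 1`. Since `x ↦ (1 + x)^a x` is increasing, it
suffices to show `(1 + g/a)^a ≤ a (1 + g)`, which is an equality at `a = 1`. For `0 ≤ c ≤ 1` the
function `a ↦ a log (1 + c/a) - log a` is antitone: its derivative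
`log (1 + c/a) - c/(a + c) - 1/a` is at most `(c - 1)/a - c/(a + c) ≤ 0`.
-/

open Real Set goldenRatio

lemma hasDerivAt_mul_log_one_add_div_sub_log {a : ℝ} (c : ℝ) (ha : 0 < a) (hac : 0 < a + c) :
    HasDerivAt (fun t : ℝ => t * log (1 + c / t) - log t)
      (log (1 + c / a) - c / (a + c) - 1 / a) a := by
  have hbase : 1 + c / a ≠ 0 := by
    rw [one_add_div ha.ne']
    exact (div_pos hac ha).ne'
  have hinner : HasDerivAt (fun t : ℝ => 1 + c / t) (-(c / a ^ 2)) a := by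
    simpa [div_eq_mul_inv] using ((hasDerivAt_inv ha.ne').const_mul c).const_add 1
  have hmul := (hasDerivAt_id a).mul (hinner.log hbase)
  refine (hmul.sub (hasDerivAt_log ha.ne')).congr_deriv ?_
  rw [id, one_mul, one_add_div ha.ne', div_div_eq_mul_div]
  field_simp
  ring

lemma antitoneOn_mul_log_one_add_div_sub_log {c : ℝ} (hc₀ : 0 ≤ c) (hc₁ : c ≤ 1) :
    AntitoneOn (fun t : ℝ => t * log (1 + c / t) - log t) (Ioi 0) := by
  have hderiv : ∀ a ∈ Ioi (0 : ℝ), HasDerivAt (fun t : ℝ => t * log (1 + c / t) - log t)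
      (log (1 + c / a) - c / (a + c) - 1 / a) a := fun a ha =>
    hasDerivAt_mul_log_one_add_div_sub_log c ha (add_pos_of_pos_of_nonneg ha hc₀)
  refine antitoneOn_of_hasDerivWithinAt_nonpos (convex_Ioi 0)
    (f' := fun a => log (1 + c / a) - c / (a + c) - 1 / a) (fun a ha => (hderiv a ha).continuousAt.continuousWithinAt) ?_ ?_ <;>
    simp only [interior_Ioi]
  · exact fun a ha => (hderiv a ha).hasDerivWithinAt
  · intro a (ha : 0 < a)
    have hlog : log (1 + c / a) ≤ c / a := by
      linarith [log_le_sub_one_of_pos (by positivity : 0 < 1 + c / a)]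
    have hc_div : c / a ≤ 1 / a := div_le_div_of_nonneg_right hc₁ ha.le
    have hfrac : 0 ≤ c / (a + c) := by positivity
    linarith

lemma one_add_div_rpow_le_mul {a c : ℝ} (ha : 1 ≤ a) (hc₀ : 0 ≤ c) (hc₁ : c ≤ 1) :
    (1 + c / a) ^ a ≤ a * (1 + c) := by
  have ha₀ : 0 < a := by linarith
  have h := antitoneOn_mul_log_one_add_div_sub_log hc₀ hc₁
    (mem_Ioi.2 one_pos) (mem_Ioi.2 ha₀) ha
  simp only [div_one, one_mul, log_one, sub_zero] at h
  calc (1 + c / a) ^ a = exp (a * log (1 + c / a)) := by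
        rw [rpow_def_of_pos (by positivity), mul_comm]
    _ ≤ exp (log a + log (1 + c)) := exp_le_exp.2 (by linarith)
    _ = a * (1 + c) := by rw [exp_add, exp_log ha₀, exp_log (by linarith)]

lemma strictMonoOn_one_add_rpow_mul_self {a : ℝ} (ha : 0 ≤ a) :
    StrictMonoOn (fun x : ℝ => (1 + x) ^ a * x) (Ici 0) := by
  intro x (hx : 0 ≤ x) y (hy : 0 ≤ y) hxy
  exact mul_lt_mul' (rpow_le_rpow (by linarith) (by linarith) ha) hxy hx (by positivity)

/-- For `a ≥ 1`, if `x₀` is the positive solution of `(1+x)^a · x = 1`, then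
`a·x₀ ≥ (√5 − 1)/2`; in particular `1/x₀ ≤ ((√5 + 1)/2)·a`. -/
theorem ax0_lower_bound (a : ℝ) (ha : 1 ≤ a) (x₀ : ℝ) (hx₀ : 0 < x₀)
    (hfx₀ : (1 + x₀) ^ a * x₀ = 1) :
    (Real.sqrt 5 - 1) / 2 ≤ a * x₀ ∧ 1 / x₀ ≤ (Real.sqrt 5 + 1) / 2 * a := by
  have ha₀ : 0 < a := by linarith
  have hφ : 1 + φ⁻¹ = φ := by rw [inv_goldenRatio, ← one_sub_goldenConj]; ring
  have hbound : φ⁻¹ / a ≤ x₀ := by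
    refine ((strictMonoOn_one_add_rpow_mul_self ha₀.le).le_iff_le
      (mem_Ici.2 (by positivity)) (mem_Ici.2 hx₀.le)).1 ?_
    calc (1 + φ⁻¹ / a) ^ a * (φ⁻¹ / a) ≤ a * (1 + φ⁻¹) * (φ⁻¹ / a) := by
          gcongr
          exact one_add_div_rpow_le_mul ha (by positivity)
            (inv_le_one_of_one_le₀ one_lt_goldenRatio.le)
      _ = 1 := by rw [hφ]; field_simp
      _ = (1 + x₀) ^ a * x₀ := hfx₀.symm
  rw [div_le_iff₀ ha₀, mul_comm] at hbound
  constructor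
  · calc (√5 - 1) / 2 = φ⁻¹ := by rw [inv_goldenRatio]; ring
      _ ≤ a * x₀ := hbound
  · rw [show (√5 + 1) / 2 = φ by ring, div_le_iff₀ hx₀]
    calc 1 = φ * φ⁻¹ := (mul_inv_cancel₀ goldenRatio_ne_zero).symm
      _ ≤ φ * (a * x₀) := by gcongr
      _ = φ * a * x₀ := by ring
end

section
/- The function g : (0,1) → ℝ defined by g(x) = −x · log(x) / log(1+x) is positive and strictly decreasing on the interval (0,1). -/
/-!
Writing `g = negMulLog / log (1 + ·)`, the numerator of `g'` is
`(-log x - 1) log (1 + x) - negMulLog x / (1 + x)`. It is negative trivially when `log x ≥ -1`;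
otherwise bound `log (1 + x) ≤ x` and use `negMulLog x < 1 - x`.
-/

open Real Set

namespace Real

lemma negMulLog_pos {x : ℝ} (h0 : 0 < x) (h1 : x < 1) : 0 < negMulLog x := by
  rw [negMulLog, neg_mul]
  exact neg_pos.2 (mul_log_neg h0 h1)

lemma hasDerivAt_negMulLog_div_log_one_add {x : ℝ} (hx : 0 < x) :
    HasDerivAt (fun y ↦ negMulLog y / log (1 + y))
      (((-log x - 1) * log (1 + x) - negMulLog x * (1 / (1 + x))) / log (1 + x) ^ 2) x := by
  have h_one_add : HasDerivAt (fun y ↦ log (1 + y)) (1 / (1 + x)) x :=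
    ((hasDerivAt_id x).const_add 1).log (by simp only [id]; positivity)
  exact (hasDerivAt_negMulLog hx.ne').div h_one_add (log_pos (by linarith)).ne'

lemma neg_log_sub_one_mul_log_one_add_lt {x : ℝ} (h0 : 0 < x) (h1 : x < 1) :
    (-log x - 1) * log (1 + x) < negMulLog x * (1 / (1 + x)) := by
  have h_pos := negMulLog_pos h0 h1
  rcases le_or_gt (-log x - 1) 0 with hc | hc
  · calc (-log x - 1) * log (1 + x) ≤ 0 :=
          mul_nonpos_of_nonpos_of_nonneg hc (log_nonneg (by linarith))
      _ < negMulLog x * (1 / (1 + x)) := by positivity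
  · have h_log : log (1 + x) ≤ x := by linarith [log_le_sub_one_of_pos (by linarith : 0 < 1 + x)]
    have h_lt : negMulLog x < 1 + x := by linarith [negMulLog_lt_one_sub_self h0.le h1.ne]
    calc (-log x - 1) * log (1 + x) ≤ (-log x - 1) * x := by gcongr
      _ = negMulLog x - x := by rw [negMulLog]; ring
      _ < negMulLog x * (1 / (1 + x)) := by
        rw [mul_one_div, lt_div_iff₀ (by linarith)]; nlinarith

end Real

/-- The function `g(x) = −x·log(x)/log(1+x)` is positive and strictly
decreasing on `(0,1)`. -/
theorem g_pos_strictAnti :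
    (∀ x ∈ Set.Ioo (0 : ℝ) 1, 0 < -x * Real.log x / Real.log (1 + x)) ∧
    StrictAntiOn (fun x : ℝ => -x * Real.log x / Real.log (1 + x)) (Set.Ioo 0 1) := by
  change (∀ x ∈ Ioo (0 : ℝ) 1, 0 < negMulLog x / log (1 + x)) ∧
    StrictAntiOn (fun x ↦ negMulLog x / log (1 + x)) (Ioo 0 1)
  refine ⟨fun x ⟨h0, h1⟩ ↦ div_pos (negMulLog_pos h0 h1) (log_pos (by linarith)), ?_⟩
  refine strictAntiOn_of_deriv_neg (convex_Ioo 0 1)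
    (fun x hx ↦ (hasDerivAt_negMulLog_div_log_one_add hx.1).continuousAt.continuousWithinAt)
    fun x hx ↦ ?_
  obtain ⟨h0, h1⟩ : x ∈ Ioo 0 1 := by rwa [interior_Ioo] at hx
  rw [(hasDerivAt_negMulLog_div_log_one_add h0).deriv]
  exact div_neg_of_neg_of_pos (sub_neg.2 (neg_log_sub_one_mul_log_one_add_lt h0 h1))
    (pow_pos (log_pos (by linarith)) 2)
end
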